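/- arXiv:1111.6559 — 4 statements merged into one kernel-verified Lean document; each statement's English description precedes it below -/
import Mathlib

section
/- Let d, q ∈ ℕ, let L, L′ ∈ ℕ with L′ ≤ L/λ(q), let x ∈ ℤ, let B ⊆ [1, L], and let B′ ⊆ {ℓ ∈ [1, L′] : x + ℓ·λ(q) ∈ B}. Then R_{qd}(B′, L′) ≤ R_d(B, L). -/
open Polynomial Real Set MeasureTheory Filter

noncomputable section

/-- A polynomial `h ∈ ℤ[x]` is `ℙ`-intersective if for every `q ∈ ℕ` it has a root
modulo `q` which is coprime to `q`. -/
def PIntersective (h : Polynomial ℤ) : Prop :=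
  ∀ q : ℕ, 0 < q → ∃ r : ℤ, Int.gcd r q = 1 ∧ (q : ℤ) ∣ h.eval r

/-- The auxiliary data attached to a `ℙ`-intersective polynomial `h`, arising from the
choice, for each prime `p`, of a `p`-adic root `z_p` of `h` which is a unit in `ℤ_p`:
the completely multiplicative function `λ` (with `λ(p) = p^{m_p}`, `m_p` the multiplicity
of `z_p`) and the coherent choice of roots `r_d ∈ (-d, 0]` (via CRT from the `z_p`). -/
structure AuxData (h : Polynomial ℤ) where
  lam : ℕ → ℕ
  r : ℕ → ℤ
  lam_pos : ∀ d : ℕ, 0 < lam d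
  lam_one : lam 1 = 1
  lam_mul : ∀ m n : ℕ, lam (m * n) = lam m * lam n
  r_lt : ∀ d : ℕ, 0 < d → -(d : ℤ) < r d
  r_nonpos : ∀ d : ℕ, 0 < d → r d ≤ 0
  r_coprime : ∀ d : ℕ, 0 < d → Int.gcd (r d) d = 1
  r_dvd : ∀ d : ℕ, 0 < d → (d : ℤ) ∣ h.eval (r d)
  r_compat : ∀ d q : ℕ, 0 < d → 0 < q → (d : ℤ) ∣ r (q * d) - r d
  lam_dvd : ∀ d : ℕ, 0 < d → ∀ n : ℤ, (lam d : ℤ) ∣ h.eval (r d + d * n)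

variable {h : Polynomial ℤ}

/-- The auxiliary polynomial `h_d(x) = h(r_d + dx)/λ(d)`, as a function on `ℤ`. -/
def hAux (A : AuxData h) (d : ℕ) (n : ℤ) : ℤ :=
  h.eval (A.r d + d * n) / A.lam d

/-- The auxiliary polynomial `h_d`, as a function on `ℝ`. -/
def hAuxR (A : AuxData h) (d : ℕ) (x : ℝ) : ℝ :=
  (Polynomial.aeval ((A.r d : ℝ) + d * x)) h / A.lam d

/-- `s = 2^k + 6`. -/
def sconst (k : ℕ) : ℕ := 2 ^ k + 6

/-- `K = 2^(10k)`. -/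
def Kconst (k : ℕ) : ℕ := 2 ^ (10 * k)

/-- The leading coefficient `b_d = d^k b / λ(d)` of `h_d`, as a real number. -/
def bAux (A : AuxData h) (k d : ℕ) : ℝ :=
  (d : ℝ) ^ k * (h.leadingCoeff : ℝ) / A.lam d

/-- `M_d(L) = (L/(s b_d))^{1/k}`. -/
def Md (A : AuxData h) (k d L : ℕ) : ℝ :=
  ((L : ℝ) / (sconst k * bAux A k d)) ^ ((k : ℝ)⁻¹)

/-- `H_d(L) = {x ∈ ℕ : 0 < h_d(x) < L/s}`. -/
def Hd (A : AuxData h) (k d L : ℕ) : Set ℕ :=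
  {y | 0 < hAux A d y ∧ (hAux A d y : ℝ) < (L : ℝ) / sconst k}

/-- The weight `ν_d(x) = (φ(d)/d) log(r_d + dx)` if `r_d + dx` is prime, and `0` otherwise. -/
def nu (A : AuxData h) (d : ℕ) (x : ℕ) : ℝ :=
  if (A.r d + d * x).toNat.Prime then
    ((d : ℕ).totient / d : ℝ) * Real.log ((A.r d + d * (x : ℤ) : ℤ) : ℝ)
  else 0

/-- The weighted count `R_d(B, L) = Σ_{x ∈ ℤ, y ∈ H_d(L)} 1_B(x) 1_B(x + h_d(y)) ν_d(y)`. -/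
def Rd (A : AuxData h) (k d L : ℕ) (B : Set ℤ) : ℝ :=
  ∑' x : ℤ, ∑' y : ℕ,
    B.indicator (fun _ => (1 : ℝ)) x * B.indicator (fun _ => (1 : ℝ)) (x + hAux A d y) *
      (Hd A k d L).indicator (fun _ => (1 : ℝ)) y * nu A d y

/-- `ψ(X, a, q) = Σ_{p ≤ X, p ≡ a (q)} log p`. -/
def psiAP (X : ℝ) (a : ℤ) (q : ℕ) : ℝ :=
  ∑' p : ℕ, if p.Prime ∧ (p : ℝ) ≤ X ∧ (p : ℤ) ≡ a [ZMOD (q : ℤ)] then Real.log p else 0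

/-- `Ψ_d(L) = (φ(d)/d) ψ(d M_d(L), r_d, d)`. -/
def PsiD (A : AuxData h) (k d L : ℕ) : ℝ :=
  (d.totient / d : ℝ) * psiAP ((d : ℝ) * Md A k d L) (A.r d) d

/-- `Q(δ) = exp(C₀ δ^{-(k+ε-1)})`. -/
def Qfun (C₀ ε : ℝ) (k : ℕ) (δ : ℝ) : ℝ :=
  Real.exp (C₀ * δ ^ (-((k : ℝ) + ε - 1)))

/-- The exponential sum `S_M(α) = Σ_{1 ≤ x ≤ M} ν_d(x) e^{2πi h_d(x) α}`. -/
def SM (A : AuxData h) (d : ℕ) (M : ℝ) (α : ℝ) : ℂ :=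
  ∑' x : ℕ, if 1 ≤ x ∧ (x : ℝ) ≤ M then
    (nu A d x : ℂ) * Complex.exp (2 * Real.pi * Complex.I * (hAux A d x : ℂ) * (α : ℂ))
  else 0

/-- The Gauss-type sum `G(a, q) = Σ_{0 ≤ ℓ < q, (r_d + dℓ, q) = 1} e^{2πi h_d(ℓ) a/q}`. -/
def Gsum (A : AuxData h) (d q : ℕ) (a : ℤ) : ℂ :=
  ∑ l ∈ Finset.range q, if Int.gcd (A.r d + d * l) q = 1 then
    Complex.exp (2 * Real.pi * Complex.I * (hAux A d (l : ℤ) : ℂ) * a / q)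
  else 0

/-- The Ruzsa–Sanders dichotomy hypothesis: data `q₀`, `ρ`, `χ` satisfying the exceptional /
unexceptional asymptotic for `ψ(X, a, q)`. -/
def RSHyp (N k : ℕ) (c₁ C₁ Qδ : ℝ) (q₀ : ℕ) (ρ : ℝ)
    (χ : DirichletCharacter ℂ q₀) : Prop :=
  (q₀ : ℝ) ≤ Qδ ^ (3 * Kconst k) ∧ (1 / 2 : ℝ) ≤ ρ ∧ ρ < 1 ∧
    (1 - ρ)⁻¹ ≤ C₁ * q₀ ∧
    ∀ (X : ℝ) (q : ℕ) (a : ℤ),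
      (N : ℝ) ^ (1 / (10 * (k : ℝ))) ≤ X → q₀ ∣ q →
      (q : ℝ) ≤ ((q₀ : ℝ) * Qδ) ^ (3 * Kconst k) → Int.gcd a q = 1 →
      ‖(psiAP X a q : ℂ) - (X : ℂ) / (q.totient : ℂ)
          + χ (a : ZMod q₀) * ((X ^ ρ : ℝ) : ℂ) / ((q.totient : ℂ) * (ρ : ℂ))‖
        ≤ C₁ * X * Real.exp (-(30 * k * (Kconst k : ℝ) ^ 2 * c₁) * Real.sqrt (Real.log X))


/-! Write `r_{qd} = r_d + d e`; the normalisation `r_n ∈ (-n, 0]` forces `e > -q`. Since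
`r_{qd} + qd y = r_d + d (e + q y)`, complete multiplicativity of `λ` gives
`λ(q) h_{qd}(y) = h_d(e + q y)`, so `(x', y) ↦ (x + λ(q) x', e + q y)` injects the configurations
counted by `R_{qd}(B', L')` into those counted by `R_d(B, L)`. The weights only grow along this
map, because `φ(n)/n` can only decrease when `n` is replaced by a multiple, while the terms with
`y = 0`, which have no image, carry the weight `ν_{qd}(0) = 0` since `r_{qd} ≤ 0`. -/

theorem Polynomial.finite_setOf_eval_mem {R : Type*} [CommRing R] [IsDomain R] {p : R[X]}
    (hp : 0 < p.natDegree) {S : Set R} (hS : S.Finite) : {n : R | p.eval n ∈ S}.Finite := by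
  refine (hS.biUnion fun v _ => finite_setOfPred_isRoot (p := p - C v) ?_).subset
    fun n hn => Set.mem_biUnion hn (by simp [IsRoot])
  intro h0
  have := congrArg natDegree h0
  rw [natDegree_sub_C, natDegree_zero] at this
  omega

theorem Nat.totient_div_le_of_dvd {m n : ℕ} (hmn : m ∣ n) (hn : n ≠ 0) :
    (n.totient / n : ℝ) ≤ m.totient / m := by
  have hm : m ≠ 0 := ne_zero_of_dvd_ne_zero hn hmn
  have euler : ∀ k : ℕ, k ≠ 0 → (k.totient / k : ℚ) = ∏ p ∈ k.primeFactors, (1 - (p : ℚ)⁻¹) :=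
    fun k hk => by rw [totient_eq_mul_prod_factors, mul_div_cancel_left₀ _ (by exact_mod_cast hk)]
  have factor_mem_Icc : ∀ p ∈ n.primeFactors, 0 ≤ 1 - (p : ℚ)⁻¹ ∧ 1 - (p : ℚ)⁻¹ ≤ 1 := by
    intro p hp
    have hp1 : (1 : ℚ) ≤ p := by exact_mod_cast (prime_of_mem_primeFactors hp).one_le
    exact ⟨sub_nonneg.2 (inv_le_one_of_one_le₀ hp1), by simp⟩
  have hQ : (n.totient / n : ℚ) ≤ m.totient / m := by
    rw [euler n hn, euler m hm]
    exact Finset.prod_le_prod_of_subset_of_le_one (primeFactors_mono hmn hn)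
      (fun p hp => (factor_mem_Icc p hp).1) fun p hp _ => (factor_mem_Icc p hp).2
  have hR := (Rat.cast_le (K := ℝ)).2 hQ
  push_cast at hR
  exact hR

theorem Set.indicator_one_nonneg {α : Type*} (s : Set α) (a : α) :
    0 ≤ s.indicator (fun _ => (1 : ℝ)) a :=
  Set.indicator_nonneg (fun _ _ => zero_le_one) a

theorem Set.indicator_one_le_indicator_one {α β : Type*} {s : Set α} {t : Set β} {a : α} {b : β}
    (h : a ∈ s → b ∈ t) :
    s.indicator (fun _ => (1 : ℝ)) a ≤ t.indicator (fun _ => (1 : ℝ)) b := by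
  by_cases ha : a ∈ s
  · simp [ha, h ha]
  · simp [ha, Set.indicator_nonneg]

theorem Int.strictMono_toNat_add_mul {e : ℤ} {q : ℕ} (hq : 0 < q) (he : -(q : ℤ) < e) :
    StrictMono fun y : ℕ => (e + q * y).toNat := by
  have hq' : (0 : ℤ) < q := by exact_mod_cast hq
  refine strictMono_nat_of_lt_succ fun y => (toNat_lt_toNat ?_).2 ?_ <;> push_cast <;> nlinarith

namespace AuxData

variable (A : AuxData h)

theorem exists_r_mul_eq {d q : ℕ} (hd : 0 < d) (hq : 0 < q) :
    ∃ e : ℤ, A.r (q * d) = A.r d + d * e ∧ -(q : ℤ) < e := by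
  obtain ⟨e, he⟩ := A.r_compat d q hd hq
  have hqd := Nat.mul_pos hq hd
  have := A.r_lt (q * d) hqd
  have := A.r_nonpos d hd
  push_cast at *
  exact ⟨e, by linarith, by nlinarith⟩

theorem lam_mul_hAux {d : ℕ} (hd : 0 < d) (n : ℤ) :
    (A.lam d : ℤ) * hAux A d n = h.eval (A.r d + d * n) :=
  Int.mul_ediv_cancel' (A.lam_dvd d hd n)

theorem lam_mul_hAux_mul {d q : ℕ} (hd : 0 < d) (hq : 0 < q) {e : ℤ}
    (hr : A.r (q * d) = A.r d + d * e) (n : ℤ) :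
    (A.lam q : ℤ) * hAux A (q * d) n = hAux A d (e + q * n) := by
  have hlam : (A.lam d : ℤ) ≠ 0 := by exact_mod_cast (A.lam_pos d).ne'
  refine mul_left_cancel₀ hlam ?_
  calc (A.lam d : ℤ) * (A.lam q * hAux A (q * d) n)
      = A.lam (q * d) * hAux A (q * d) n := by rw [A.lam_mul]; push_cast; ring
    _ = h.eval (A.r d + d * (e + q * n)) := by
      rw [A.lam_mul_hAux (Nat.mul_pos hq hd), hr]; push_cast; ring_nf
    _ = A.lam d * hAux A d (e + q * n) := (A.lam_mul_hAux hd _).symm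

theorem finite_setOf_hAux_mem (hdeg : 0 < h.natDegree) {d : ℕ} (hd : 0 < d) {S : Set ℤ}
    (hS : S.Finite) : {n : ℤ | hAux A d n ∈ S}.Finite := by
  have haffine : Function.Injective fun n : ℤ => A.r d + d * n := fun a b hab =>
    mul_left_cancel₀ (by exact_mod_cast hd.ne') (add_left_cancel hab)
  refine ((Polynomial.finite_setOf_eval_mem hdeg (hS.image ((A.lam d : ℤ) * ·))).preimage
    haffine.injOn).subset fun n hn => ?_
  exact ⟨hAux A d n, hn, A.lam_mul_hAux hd n⟩

theorem nu_nonneg (d y : ℕ) : 0 ≤ nu A d y := by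
  unfold nu
  split_ifs with hp
  · have : (1 : ℤ) ≤ A.r d + d * y := by have := hp.two_le; omega
    exact mul_nonneg (by positivity) (Real.log_nonneg (by exact_mod_cast this))
  · exact le_rfl

theorem nu_zero {d : ℕ} (hd : 0 < d) : nu A d 0 = 0 := by
  have : (A.r d + d * ((0 : ℕ) : ℤ)).toNat = 0 := by simpa using A.r_nonpos d hd
  simp only [nu, this, Nat.not_prime_zero, if_false]

theorem nu_le_of_dvd {d d' y y' : ℕ} (hdd' : d ∣ d') (hd' : d' ≠ 0)
    (hy : A.r d' + d' * y' = A.r d + d * y) : nu A d' y' ≤ nu A d y := by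
  unfold nu
  rw [hy]
  split_ifs with hp
  · have : (1 : ℤ) ≤ A.r d + d * y := by have := hp.two_le; omega
    exact mul_le_mul_of_nonneg_right (Nat.totient_div_le_of_dvd hdd' hd')
      (Real.log_nonneg (by exact_mod_cast this))
  · exact le_rfl

theorem mem_Hd_of_hAux_eq_mul {k d d' L L' : ℕ} {y y' : ℕ} {c : ℕ} (hc : 0 < c)
    (hL : (c : ℝ) * L' ≤ L) (hy : hAux A d y = c * hAux A d' y') (hy' : y' ∈ Hd A k d' L') :
    y ∈ Hd A k d L := by
  obtain ⟨hpos, hlt⟩ := hy'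
  have hs : (0 : ℝ) < sconst k := by unfold sconst; positivity
  refine ⟨hy ▸ mul_pos (by exact_mod_cast hc) hpos, ?_⟩
  calc (hAux A d y : ℝ) = c * hAux A d' y' := by rw [hy]; push_cast; ring
    _ < c * (L' / sconst k) := mul_lt_mul_of_pos_left hlt (by exact_mod_cast hc)
    _ ≤ L / sconst k := by rw [← mul_div_assoc]; gcongr

def rdSummand (k d L : ℕ) (B : Set ℤ) (X : ℤ) (Y : ℕ) : ℝ :=
  B.indicator (fun _ => (1 : ℝ)) X * B.indicator (fun _ => (1 : ℝ)) (X + hAux A d Y) *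
    (Hd A k d L).indicator (fun _ => (1 : ℝ)) Y * nu A d Y

theorem Rd_eq_tsum_rdSummand (k d L : ℕ) (B : Set ℤ) :
    Rd A k d L B = ∑' X, ∑' Y, A.rdSummand k d L B X Y :=
  rfl

variable {A}
variable {k d L : ℕ} {B : Set ℤ}

theorem rdSummand_nonneg (X : ℤ) (Y : ℕ) : 0 ≤ A.rdSummand k d L B X Y := by
  unfold rdSummand
  repeat' apply mul_nonneg
  all_goals first | exact Set.indicator_one_nonneg _ _ | exact A.nu_nonneg d Y

theorem rdSummand_zero_right (hd : 0 < d) (X : ℤ) : A.rdSummand k d L B X 0 = 0 := by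
  rw [rdSummand, A.nu_zero hd, mul_zero]

theorem rdSummand_of_notMem (X : ℤ) (hX : X ∉ B) (Y : ℕ) : A.rdSummand k d L B X Y = 0 := by
  rw [rdSummand, Set.indicator_of_notMem hX]
  ring

theorem rdSummand_le_rdSummand {d' L' : ℕ} {B' : Set ℤ} {X X' : ℤ} {Y Y' : ℕ}
    (hX : X' ∈ B' → X ∈ B) (hXY : X' + hAux A d' Y' ∈ B' → X + hAux A d Y ∈ B)
    (hY : Y' ∈ Hd A k d' L' → Y ∈ Hd A k d L) (hnu : nu A d' Y' ≤ nu A d Y) :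
    A.rdSummand k d' L' B' X' Y' ≤ A.rdSummand k d L B X Y := by
  unfold rdSummand
  gcongr
  · exact A.nu_nonneg d' Y'
  all_goals (repeat' apply mul_nonneg) <;>
    first | exact Set.indicator_one_nonneg _ _ | exact Set.indicator_one_le_indicator_one ‹_›

theorem summable_rdSummand (hdeg : 0 < h.natDegree) (hd : 0 < d) (hB : B.Finite) (X : ℤ) :
    Summable (A.rdSummand k d L B X) := by
  refine summable_of_hasFiniteSupport (((A.finite_setOf_hAux_mem hdeg hd
    (hB.preimage (add_right_injective X).injOn)).preimage Nat.cast_injective.injOn).subset ?_)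
  intro Y hY
  by_contra hXY
  exact hY (by rw [rdSummand, Set.indicator_of_notMem (show X + hAux A d Y ∉ B from hXY)]; ring)

theorem summable_tsum_rdSummand (hB : B.Finite) :
    Summable fun X => ∑' Y, A.rdSummand k d L B X Y := by
  refine summable_of_hasFiniteSupport (hB.subset fun X hX => ?_)
  by_contra hXB
  exact hX (by simp only [rdSummand_of_notMem X hXB, tsum_zero])

theorem Rd_le_Rd_of_injective (hdeg : 0 < h.natDegree) {d' L' : ℕ} {B' : Set ℤ}
    (hd : 0 < d) (hd' : 0 < d') (hB : B.Finite) (hB' : B'.Finite) {i : ℤ → ℤ} {j : ℕ → ℕ}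
    (hi : Function.Injective i) (hj : Function.Injective j)
    (hle : ∀ X Y, A.rdSummand k d' L' B' X Y ≤ A.rdSummand k d L B (i X) (j Y)) :
    Rd A k d' L' B' ≤ Rd A k d L B := by
  rw [Rd_eq_tsum_rdSummand, Rd_eq_tsum_rdSummand]
  refine Summable.tsum_le_tsum_of_inj i hi (fun X _ => tsum_nonneg (rdSummand_nonneg X))
    (fun X => ?_) (summable_tsum_rdSummand hB') (summable_tsum_rdSummand hB)
  exact Summable.tsum_le_tsum_of_inj j hj (fun Y _ => rdSummand_nonneg _ Y) (hle X)
    (summable_rdSummand hdeg hd' hB' X) (summable_rdSummand hdeg hd hB (i X))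

end AuxData

open AuxData in
theorem inheritance_of_deficiency_general
    (k : ℕ) (hk : 2 ≤ k) (hdeg : h.natDegree = k)
    (A : AuxData h)
    (d q L L' : ℕ) (hd : 0 < d) (hq : 0 < q)
    (hL' : (L' : ℝ) ≤ (L : ℝ) / A.lam q)
    (x : ℤ) (B B' : Set ℤ) (hB : B ⊆ Set.Icc 1 (L : ℤ))
    (hB' : B' ⊆ {l : ℤ | l ∈ Set.Icc 1 (L' : ℤ) ∧ x + l * A.lam q ∈ B}) :
    Rd A k (q * d) L' B' ≤ Rd A k d L B := by
  obtain ⟨e, hr, he_gt⟩ := A.exists_r_mul_eq hd hq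
  have hlam : (0 : ℝ) < A.lam q := by exact_mod_cast A.lam_pos q
  have hL : (A.lam q : ℝ) * L' ≤ L := by rwa [le_div_iff₀' hlam] at hL'
  set i : ℤ → ℤ := fun x' => x + x' * A.lam q
  set j : ℕ → ℕ := fun y => (e + q * y).toNat
  have hi : Function.Injective i := fun a b hab =>
    mul_right_cancel₀ (by exact_mod_cast (A.lam_pos q).ne') (add_left_cancel hab)
  have hj_cast : ∀ y, 0 < y → (j y : ℤ) = e + q * y := fun y hy =>
    Int.toNat_of_nonneg (by nlinarith [show (1 : ℤ) ≤ y by exact_mod_cast hy])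
  refine Rd_le_Rd_of_injective (by omega) hd (Nat.mul_pos hq hd)
    ((Set.finite_Icc _ _).subset hB) ((Set.finite_Icc _ _).subset fun l hl => (hB' hl).1)
    hi (Int.strictMono_toNat_add_mul hq he_gt).injective fun x' y => ?_
  rcases y.eq_zero_or_pos with rfl | hy
  · exact (rdSummand_zero_right (Nat.mul_pos hq hd) x').trans_le (rdSummand_nonneg _ _)
  have hAux_j : hAux A d (j y) = A.lam q * hAux A (q * d) y := by
    rw [hj_cast y hy, A.lam_mul_hAux_mul hd hq hr]
  refine rdSummand_le_rdSummand (fun hx' => (hB' hx').2) (fun hx' => ?_)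
    (A.mem_Hd_of_hAux_eq_mul (A.lam_pos q) hL hAux_j)
    (A.nu_le_of_dvd (dvd_mul_left d q) (Nat.mul_pos hq hd).ne' ?_)
  · convert (hB' hx').2 using 1
    rw [hAux_j]; ring
  · rw [hr, hj_cast y hy]; push_cast; ring

/-- **Proposition (inheritance of deficiency)**: if `B ⊆ [1, L]`,
`B' ⊆ {ℓ ∈ [1, L'] : x + ℓ λ(q) ∈ B}` and `L' ≤ L/λ(q)`, then for any `d`,
`R_{qd}(B', L') ≤ R_d(B, L)`. -/
theorem inheritance_of_deficiency
    (k : ℕ) (hk : 2 ≤ k) (hdeg : h.natDegree = k) (hlead : 0 < h.leadingCoeff)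
    (hint : PIntersective h) (A : AuxData h)
    (d q L L' : ℕ) (hd : 0 < d) (hq : 0 < q)
    (hL' : (L' : ℝ) ≤ (L : ℝ) / A.lam q)
    (x : ℤ) (B B' : Set ℤ) (hB : B ⊆ Set.Icc 1 (L : ℤ))
    (hB' : B' ⊆ {l : ℤ | l ∈ Set.Icc 1 (L' : ℤ) ∧ x + l * A.lam q ∈ B}) :
    Rd A k (q * d) L' B' ≤ Rd A k d L B :=
  inheritance_of_deficiency_general k hk hdeg A d q L L' hd hq hL' x B B' hB hB'

end
end

section
/- For every polynomial h ∈ ℤ[x], the following are equivalent: (i) for every q ∈ ℕ there exists r ∈ ℤ with gcd(r, q) = 1 and q ∣ h(r); (ii) for every prime p there exists z ∈ ℤ_p, the ring of p-adic integers, with h(z) = 0 and z ∉ p·ℤ_p. -/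
/-!
Condition (i) says that `h` has a unit root in `ZMod q` for every `q > 0`; by the Chinese remainder
theorem it suffices to take `q = p ^ n`. A unit root in `ℤ_[p]` reduces to a unit root modulo every
`p ^ n`. Conversely, lifting unit roots modulo `p ^ n` gives units `z` of `ℤ_[p]` with
`‖h(z)‖ ≤ p⁻ⁿ`; the units form a compact set, so `‖h‖` attains its infimum `0` on it.
-/

open Polynomial

namespace Polynomial

theorem aeval_ringHom_apply {R S : Type*} [Ring R] [Ring S] (f : R →+* S) (x : R) (h : ℤ[X]) :
    aeval (f x) h = f (aeval x h) :=
  aeval_algHom_apply f.toIntAlgHom x h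

def HasUnitRoot (h : ℤ[X]) (R : Type*) [CommRing R] : Prop :=
  ∃ x : R, IsUnit x ∧ aeval x h = 0

namespace HasUnitRoot

variable {h : ℤ[X]} {R S : Type*} [CommRing R] [CommRing S]

theorem map (f : R →+* S) : HasUnitRoot h R → HasUnitRoot h S := by
  rintro ⟨x, hx, hx0⟩
  exact ⟨f x, hx.map f, by rw [aeval_ringHom_apply, hx0, map_zero]⟩

theorem prod : HasUnitRoot h R → HasUnitRoot h S → HasUnitRoot h (R × S) := by
  rintro ⟨x, hx, hx0⟩ ⟨y, hy, hy0⟩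
  exact ⟨(x, y), Prod.isUnit_iff.mpr ⟨hx, hy⟩,
    (aeval_prod_apply (x, y) h).trans (by rw [hx0, hy0]; rfl)⟩

theorem zmod_mul {a b : ℕ} (hab : a.Coprime b) (ha : HasUnitRoot h (ZMod a))
    (hb : HasUnitRoot h (ZMod b)) : HasUnitRoot h (ZMod (a * b)) :=
  (ha.prod hb).map (ZMod.chineseRemainder hab).symm.toRingHom

theorem zmod_of_forall_prime_pow (H : ∀ p n : ℕ, p.Prime → 0 < n → HasUnitRoot h (ZMod (p ^ n)))
    {q : ℕ} (hq : 0 < q) : HasUnitRoot h (ZMod q) := by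
  induction q using Nat.recOnPosPrimePosCoprime with
  | prime_pow p n hp hn => exact H p n hp hn
  | zero => exact absurd hq (lt_irrefl 0)
  | one => exact ⟨0, isUnit_of_subsingleton 0, Subsingleton.elim _ _⟩
  | coprime a b _ _ hab iha ihb => exact zmod_mul hab (iha (by omega)) (ihb (by omega))

end HasUnitRoot

theorem hasUnitRoot_zmod_iff {h : ℤ[X]} {q : ℕ} :
    HasUnitRoot h (ZMod q) ↔ ∃ r : ℤ, Int.gcd r q = 1 ∧ (q : ℤ) ∣ h.eval r := by
  have key (r : ℤ) : IsUnit (r : ZMod q) ∧ aeval (r : ZMod q) h = 0 ↔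
      Int.gcd r q = 1 ∧ (q : ℤ) ∣ h.eval r := by
    rw [ZMod.coe_int_isUnit_iff_isCoprime, isCoprime_comm, Int.isCoprime_iff_gcd_eq_one,
      ← ZMod.intCast_zmod_eq_zero_iff_dvd, ← eq_intCast (Int.castRingHom (ZMod q)) r,
      aeval_ringHom_apply, coe_aeval_eq_eval, eq_intCast]
  simp only [HasUnitRoot, ← key]
  exact ZMod.intCast_surjective.exists

end Polynomial

theorem IsCompact.exists_eq_zero_of_forall_exists_norm_lt {X E : Type*} [TopologicalSpace X]
    [NormedAddGroup E] {K : Set X} {f : X → E} (hK : IsCompact K) (hf : ContinuousOn f K)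
    (H : ∀ ε > 0, ∃ x ∈ K, ‖f x‖ < ε) : ∃ x ∈ K, f x = 0 := by
  obtain ⟨x, hx, hmin⟩ := hK.exists_isMinOn (let ⟨x, hx, _⟩ := H 1 one_pos; ⟨x, hx⟩) hf.norm
  refine ⟨x, hx, norm_eq_zero.mp (le_antisymm ?_ (norm_nonneg _))⟩
  by_contra! hpos
  obtain ⟨y, hy, hlt⟩ := H _ hpos
  exact (hmin hy).not_gt hlt

namespace PadicInt

variable {p : ℕ} [Fact p.Prime] {h : ℤ[X]}

theorem isUnit_iff_not_dvd {z : ℤ_[p]} : IsUnit z ↔ ¬(p : ℤ_[p]) ∣ z := by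
  rw [← norm_lt_one_iff_dvd, ← not_isUnit_iff, not_not]

theorem isCompact_setOf_isUnit : IsCompact {z : ℤ_[p] | IsUnit z} := by
  simp only [isUnit_iff]
  exact (isClosed_eq continuous_norm continuous_const).isCompact

theorem hasUnitRoot_iff : HasUnitRoot h ℤ_[p] ↔ ∃ z : ℤ_[p], aeval z h = 0 ∧ ¬(p : ℤ_[p]) ∣ z := by
  simp only [HasUnitRoot, isUnit_iff_not_dvd, and_comm]

theorem exists_isUnit_norm_aeval_le (n : ℕ) (hroot : HasUnitRoot h (ZMod (p ^ (n + 1)))) :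
    ∃ z : ℤ_[p], IsUnit z ∧ ‖aeval z h‖ ≤ (p : ℝ) ^ (-((n + 1 : ℕ) : ℤ)) := by
  obtain ⟨x, hx, hx0⟩ := hroot
  obtain ⟨z, rfl⟩ := ZMod.ringHom_surjective (toZModPow (p := p) (n + 1)) x
  have : Nontrivial (ZMod (p ^ (n + 1))) :=
    ZMod.nontrivial_iff.mpr (Nat.pow_eq_one.not.mpr (by simp [(Fact.out : p.Prime).ne_one]))
  have := IsLocalHom.of_surjective _ (ZMod.ringHom_surjective (toZModPow (p := p) (n + 1)))
  -- `ℤ_[p]` is local, so a preimage of a unit under the surjection `toZModPow` is a unit.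
  refine ⟨z, isUnit_of_map_unit _ _ hx, ?_⟩
  rwa [norm_le_pow_iff_mem_span_pow, ← ker_toZModPow, RingHom.mem_ker, ← aeval_ringHom_apply]

theorem hasUnitRoot_of_forall_zmod_pow (H : ∀ n, HasUnitRoot h (ZMod (p ^ n))) :
    HasUnitRoot h ℤ_[p] := by
  refine isCompact_setOf_isUnit.exists_eq_zero_of_forall_exists_norm_lt
    h.continuous_aeval.continuousOn fun ε hε => ?_
  obtain ⟨n, hn⟩ := exists_pow_neg_lt p hε
  obtain ⟨z, hz, hle⟩ := exists_isUnit_norm_aeval_le n (H (n + 1))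
  refine ⟨z, hz, hle.trans_lt (lt_of_le_of_lt ?_ hn)⟩
  exact zpow_le_zpow_right₀ (mod_cast (Fact.out : p.Prime).one_le) (by omega)

theorem hasUnitRoot_iff_forall_zmod_pow :
    HasUnitRoot h ℤ_[p] ↔ ∀ n, HasUnitRoot h (ZMod (p ^ n)) :=
  ⟨fun hz n => hz.map (toZModPow n), hasUnitRoot_of_forall_zmod_pow⟩

end PadicInt

/-- **Equivalence of the two definitions of `ℙ`-intersectivity**: `h ∈ ℤ[x]` has, for
every `q ∈ ℕ`, a root modulo `q` coprime to `q` if and only if for every prime `p` it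
has a `p`-adic integer root which is a unit in `ℤ_p`. -/
theorem P_intersective_iff_padic (h : Polynomial ℤ) :
    (∀ q : ℕ, 0 < q → ∃ r : ℤ, Int.gcd r q = 1 ∧ (q : ℤ) ∣ h.eval r) ↔
    (∀ p : ℕ, (hp : p.Prime) →
      haveI : Fact p.Prime := ⟨hp⟩
      ∃ z : ℤ_[p], Polynomial.aeval z h = 0 ∧ ¬((p : ℤ_[p]) ∣ z)) := by
  simp only [← hasUnitRoot_zmod_iff]
  refine ⟨fun H p hp => ?_, fun H q hq => ?_⟩
  · have : Fact p.Prime := ⟨hp⟩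
    rw [← PadicInt.hasUnitRoot_iff, PadicInt.hasUnitRoot_iff_forall_zmod_pow]
    exact fun n => H _ (pow_pos hp.pos n)
  · refine HasUnitRoot.zmod_of_forall_prime_pow (fun p n hp _ => ?_) hq
    have : Fact p.Prime := ⟨hp⟩
    exact PadicInt.hasUnitRoot_iff_forall_zmod_pow.mp (PadicInt.hasUnitRoot_iff.mpr (H p hp)) n
end

section
/- Let h ∈ ℤ[x] have degree 2. Then h is P-intersective if and only if there exist integers a, b, c, d, e with b ≥ 1, d ≥ 1, e ≠ 0, gcd(a, b) = 1, gcd(c, d) = 1, gcd(a·b, c·d) = 1, and h(x) = e·(bx − a)·(dx − c); that is, if and only if h has two rational roots a/b and c/d (counted with multiplicity, in lowest terms) with gcd(ab, cd) = 1. -/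
/-!
If `h = AX² + BX + C₀` has a root modulo every `q`, then the discriminant `B² - 4AC₀` is a
square modulo every `q`, hence a square: a prime dividing it divides it to the second power,
the quotient is again a square modulo every `q`, and `-1` is not a square modulo `4`. So `4A·h` splits over `ℤ` into two linear factors, and
Gauss's lemma turns this into `h = e(bX - a)(dX - c)` with both factors primitive. A prime `p`
dividing both `ab` and `cd` divides neither `br - a` nor `dr - c` once `p ∤ r`, so there is no
root coprime to `p` modulo `p·e`.

Conversely, having a root coprime to `q` is multiplicative in coprime `q` by the Chinese
remainder theorem, and modulo a prime power `p^k` one of the two linear factors has both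
coefficients prime to `p`, hence a root that is a unit.
-/

open Polynomial

namespace Int

lemma not_four_dvd_sq_add_one (t : ℤ) : ¬ (4 : ℤ) ∣ t ^ 2 + 1 := by
  rw [show (4 : ℤ) = ((4 : ℕ) : ℤ) from rfl, ← ZMod.intCast_zmod_eq_zero_iff_dvd]
  push_cast
  generalize (t : ZMod 4) = x
  revert x
  decide

lemma sq_dvd_of_forall_dvd_sq_sub {D : ℤ} (hD : ∀ q : ℕ, 0 < q → ∃ t : ℤ, (q : ℤ) ∣ t ^ 2 - D)
    {p : ℕ} (hp : p.Prime) (hpD : (p : ℤ) ∣ D) : (p : ℤ) ^ 2 ∣ D := by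
  obtain ⟨t, ht⟩ := hD (p ^ 2) (pow_pos hp.pos 2)
  push_cast at ht
  have hpt : (p : ℤ) ∣ t :=
    Int.Prime.dvd_pow' (k := 2) hp (by simpa using (dvd_pow_self _ two_ne_zero |>.trans ht).add hpD)
  simpa using dvd_sub (pow_dvd_pow_of_dvd hpt 2) ht

lemma forall_dvd_sq_sub_of_sq_mul {p : ℕ} (hp : p.Prime) {D : ℤ}
    (hD : ∀ q : ℕ, 0 < q → ∃ t : ℤ, (q : ℤ) ∣ t ^ 2 - p ^ 2 * D) :
    ∀ q : ℕ, 0 < q → ∃ t : ℤ, (q : ℤ) ∣ t ^ 2 - D := by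
  intro q hq
  obtain ⟨t, ht⟩ := hD (p ^ 2 * q) (Nat.mul_pos (pow_pos hp.pos 2) hq)
  push_cast at ht
  obtain ⟨t', rfl⟩ : (p : ℤ) ∣ t := by
    rw [← Int.pow_dvd_pow_iff two_ne_zero]
    simpa using (dvd_mul_right _ _ |>.trans ht).add (dvd_mul_right ((p : ℤ) ^ 2) D)
  refine ⟨t', (mul_dvd_mul_iff_left (pow_ne_zero 2 (Int.natCast_ne_zero.2 hp.ne_zero))).1 ?_⟩
  rwa [mul_sub, ← mul_pow]

theorem isSquare_of_forall_dvd_sq_sub (D : ℤ)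
    (hD : ∀ q : ℕ, 0 < q → ∃ t : ℤ, (q : ℤ) ∣ t ^ 2 - D) : IsSquare D := by
  induction hn : D.natAbs using Nat.strong_induction_on generalizing D with
  | _ n ih =>
  rcases Nat.lt_or_ge n 2 with hn2 | hn2
  · obtain rfl | rfl | rfl : D = 0 ∨ D = 1 ∨ D = -1 := by omega
    · exact ⟨0, rfl⟩
    · exact ⟨1, rfl⟩
    · obtain ⟨t, ht⟩ := hD 4 (by norm_num)
      exact absurd (by simpa using ht) (not_four_dvd_sq_add_one t)
  · obtain ⟨p, hp, hpD⟩ := Nat.exists_prime_and_dvd (show D.natAbs ≠ 1 by omega)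
    obtain ⟨D', rfl⟩ := sq_dvd_of_forall_dvd_sq_sub hD hp (Int.natCast_dvd.mpr hpD)
    have hlt : D'.natAbs < n := by
      rw [← hn, Int.natAbs_mul, Int.natAbs_pow, Int.natAbs_natCast]
      refine lt_mul_left (Nat.pos_of_ne_zero ?_) (Nat.one_lt_pow two_ne_zero hp.one_lt)
      rintro h
      simp [Int.natAbs_eq_zero.1 h] at hn
      omega
    obtain ⟨r, rfl⟩ := ih _ hlt D' (forall_dvd_sq_sub_of_sq_mul hp hD) rfl
    exact ⟨p * r, by ring⟩

end Int

lemma Prime.not_dvd_mul_sub {R : Type*} [CommRing R] {p a b r : R} (hp : Prime p)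
    (hab : IsCoprime a b) (hpab : p ∣ a * b) (hpr : ¬ p ∣ r) : ¬ p ∣ b * r - a := by
  intro h
  have hnot : ¬ (p ∣ a ∧ p ∣ b) := fun ⟨ha, hb⟩ => hp.not_isUnit (hab.isUnit_of_dvd' ha hb)
  rcases hp.dvd_or_dvd hpab with ha | hb
  · rcases hp.dvd_or_dvd (by simpa using h.add ha : p ∣ b * r) with hb | hr
    · exact hnot ⟨ha, hb⟩
    · exact hpr hr
  · exact hnot ⟨by simpa using (hb.mul_right r).sub h, hb⟩

namespace Polynomial

lemma isPrimitive_C_mul_X_sub_C {R : Type*} [CommRing R] {a b : R} (h : IsCoprime a b) :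
    (C b * X - C a).IsPrimitive := by
  rw [isPrimitive_iff_isUnit_of_C_dvd]
  intro r hr
  rw [C_dvd_iff_dvd_coeff] at hr
  simpa using h.isUnit_of_dvd' (by simpa using hr 0) (by simpa using hr 1)

lemma IsPrimitive.exists_eq_C_mul_of_C_mul_eq {R : Type*} [CommRing R] [IsDomain R]
    [StrongNormalizedGCDMonoid R] {m k : R} {f P : R[X]} (hP : P.IsPrimitive) (hm : m ≠ 0)
    (hk : C m * f = C k * P) : ∃ e, f = C e * P := by
  have hmk : m ∣ k := by
    have hc := congrArg content hk
    rw [content_C_mul, content_C_mul, hP.content_eq_one, mul_one] at hc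
    exact dvd_normalize_iff.1 (hc ▸ (normalize_associated m).symm.dvd.mul_right _)
  obtain ⟨e, rfl⟩ := hmk
  exact ⟨e, mul_left_cancel₀ (C_ne_zero.2 hm) (by rw [hk, C_mul, mul_assoc])⟩

lemma exists_C_mul_X_add_C_eq_C_mul_primitive {u : ℤ} (hu : u ≠ 0) (v : ℤ) :
    ∃ g a b : ℤ, 0 < b ∧ IsCoprime a b ∧ C u * X + C v = C g * (C b * X - C a) := by
  obtain ⟨g, u', v', -, hcop, rfl, rfl⟩ := Int.exists_gcd_one' (Int.gcd_pos_of_ne_zero_left v hu)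
  rw [← Int.isCoprime_iff_gcd_eq_one] at hcop
  rcases (left_ne_zero_of_mul hu).lt_or_gt with hu' | hu'
  · exact ⟨-g, v', -u', by omega, hcop.symm.neg_right, by simp only [C_mul, C_neg]; ring⟩
  · exact ⟨g, -v', u', hu', hcop.symm.neg_left, by simp only [C_mul, C_neg]; ring⟩

lemma isSquare_discrim_of_forall_dvd_eval {A B C₀ : ℤ}
    (H : ∀ q : ℕ, 0 < q → ∃ r : ℤ, (q : ℤ) ∣ (C A * X ^ 2 + C B * X + C C₀).eval r) :
    IsSquare (discrim A B C₀) := by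
  refine Int.isSquare_of_forall_dvd_sq_sub _ fun q hq => ?_
  obtain ⟨r, hr⟩ := H q hq
  refine ⟨2 * A * r + B, ?_⟩
  have hsq : (2 * A * r + B) ^ 2 - discrim A B C₀ =
      4 * A * (C A * X ^ 2 + C B * X + C C₀).eval r := by
    simp only [discrim, eval_add, eval_mul, eval_pow, eval_C, eval_X]
    ring
  rw [hsq]
  exact hr.mul_left _

lemma exists_primitive_factorization_of_discrim_eq {A B C₀ s : ℤ} (hA : A ≠ 0)
    (hs : discrim A B C₀ = s * s) :
    ∃ a b c d e : ℤ, 0 < b ∧ 0 < d ∧ IsCoprime a b ∧ IsCoprime c d ∧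
      C A * X ^ 2 + C B * X + C C₀ = C e * (C b * X - C a) * (C d * X - C c) := by
  obtain ⟨g₁, a, b, hb, hab, h₁⟩ :=
    exists_C_mul_X_add_C_eq_C_mul_primitive (mul_ne_zero two_ne_zero hA) (B - s)
  obtain ⟨g₂, c, d, hd, hcd, h₂⟩ :=
    exists_C_mul_X_add_C_eq_C_mul_primitive (mul_ne_zero two_ne_zero hA) (B + s)
  have hsC : C s * C s = C B * C B - 4 * C A * C C₀ := by
    rw [← C_mul, ← hs, discrim]
    simp only [map_sub, map_mul, map_pow, map_ofNat]
    ring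
  have key : C (4 * A) * (C A * X ^ 2 + C B * X + C C₀) =
      C (g₁ * g₂) * ((C b * X - C a) * (C d * X - C c)) := by
    rw [C_mul (a := g₁), mul_mul_mul_comm (C g₁), ← h₁, ← h₂]
    simp only [map_sub, map_add, map_mul, map_ofNat]
    linear_combination hsC
  have hP := (isPrimitive_C_mul_X_sub_C hab).mul (isPrimitive_C_mul_X_sub_C hcd)
  obtain ⟨e, he⟩ := hP.exists_eq_C_mul_of_C_mul_eq (mul_ne_zero four_ne_zero hA) key
  exact ⟨a, b, c, d, e, hb, hd, hab, hcd, by rw [he, mul_assoc]⟩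

/-- `h` is `ℙ`-intersective iff this holds for every `q > 0`. -/
def HasCoprimeRootMod (h : ℤ[X]) (q : ℕ) : Prop :=
  ∃ r : ℤ, IsCoprime r q ∧ (q : ℤ) ∣ h.eval r

lemma isCoprime_and_dvd_eval_add_mul {h : ℤ[X]} {q : ℕ} {r : ℤ}
    (hr : IsCoprime r q ∧ (q : ℤ) ∣ h.eval r) (k : ℤ) :
    IsCoprime (r + q * k) q ∧ (q : ℤ) ∣ h.eval (r + q * k) := by
  refine ⟨hr.1.add_mul_left_left k, ?_⟩
  have hsub := sub_dvd_eval_sub (r + q * k) r h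
  rw [add_sub_cancel_left] at hsub
  simpa using ((dvd_mul_right (q : ℤ) k).trans hsub).add hr.2

namespace HasCoprimeRootMod

lemma of_dvd {g h : ℤ[X]} (hgh : g ∣ h) {q : ℕ} (hg : g.HasCoprimeRootMod q) :
    h.HasCoprimeRootMod q := by
  obtain ⟨r, hr, hq⟩ := hg
  obtain ⟨k, rfl⟩ := hgh
  exact ⟨r, hr, by rw [eval_mul]; exact hq.mul_right _⟩

lemma mul {h : ℤ[X]} {m n : ℕ} (hmn : m.Coprime n) (hm : h.HasCoprimeRootMod m)
    (hn : h.HasCoprimeRootMod n) : h.HasCoprimeRootMod (m * n) := by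
  obtain ⟨r₁, hr₁⟩ := hm
  obtain ⟨r₂, hr₂⟩ := hn
  obtain ⟨x, y, hxy⟩ := Nat.isCoprime_iff_coprime.2 hmn
  have h₁ := isCoprime_and_dvd_eval_add_mul hr₁ (x * (r₂ - r₁))
  have h₂ := isCoprime_and_dvd_eval_add_mul hr₂ (y * (r₁ - r₂))
  have hcrt : r₂ + n * (y * (r₁ - r₂)) = r₁ + m * (x * (r₂ - r₁)) := by
    linear_combination (r₁ - r₂) * hxy
  rw [hcrt] at h₂
  refine ⟨r₁ + m * (x * (r₂ - r₁)), ?_, ?_⟩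
  · push_cast
    exact h₁.1.mul_right h₂.1
  · push_cast
    exact (Nat.isCoprime_iff_coprime.2 hmn).mul_dvd h₁.2 h₂.2

lemma of_forall_prime_pow {h : ℤ[X]}
    (H : ∀ p k : ℕ, p.Prime → 0 < k → h.HasCoprimeRootMod (p ^ k)) :
    ∀ q : ℕ, 0 < q → h.HasCoprimeRootMod q := by
  intro q
  induction q using Nat.recOnPosPrimePosCoprime with
  | prime_pow p k hp hk => exact fun _ => H p k hp hk
  | zero => exact fun h0 => absurd h0 (lt_irrefl 0)
  | one => exact fun _ => ⟨1, isCoprime_one_left, by simp⟩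
  | coprime m n hm hn hmn ihm ihn => exact fun _ => (ihm (by omega)).mul hmn (ihn (by omega))

lemma C_mul_X_sub_C {a b : ℤ} {q : ℕ} (ha : IsCoprime a q) (hb : IsCoprime b q) :
    (C b * X - C a).HasCoprimeRootMod q := by
  obtain ⟨u, v, huv⟩ := hb
  have hu : IsCoprime u q := ⟨b, v, by linear_combination huv⟩
  refine ⟨u * a, hu.mul_left ha, -(v * a), ?_⟩
  simp only [eval_sub, eval_mul, eval_C, eval_X]
  linear_combination a * huv

end HasCoprimeRootMod

open HasCoprimeRootMod in
theorem hasCoprimeRootMod_of_isCoprime {a b c d : ℤ} (e : ℤ)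
    (habcd : IsCoprime (a * b) (c * d)) (q : ℕ) (hq : 0 < q) :
    (C e * (C b * X - C a) * (C d * X - C c)).HasCoprimeRootMod q := by
  refine of_forall_prime_pow (fun p k hp _ => ?_) q hq
  have hp' : Prime (p : ℤ) := Nat.prime_iff_prime_int.1 hp
  by_cases hpab : (p : ℤ) ∣ a * b
  · have hcd : IsCoprime (c * d) ((p ^ k : ℕ) : ℤ) := by
      rw [Nat.cast_pow]
      exact ((hp'.coprime_iff_not_dvd.2 fun hpcd => hp'.not_isUnit
        (habcd.isUnit_of_dvd' hpab hpcd)).pow_left).symm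
    exact (C_mul_X_sub_C hcd.of_mul_left_left hcd.of_mul_left_right).of_dvd (dvd_mul_left _ _)
  · have hab : IsCoprime (a * b) ((p ^ k : ℕ) : ℤ) := by
      rw [Nat.cast_pow]
      exact (hp'.coprime_iff_not_dvd.2 hpab).pow_left.symm
    exact (C_mul_X_sub_C hab.of_mul_left_left hab.of_mul_left_right).of_dvd
      ((dvd_mul_left _ _).mul_right _)

theorem isCoprime_mul_of_forall_hasCoprimeRootMod {a b c d e : ℤ} (he : e ≠ 0)
    (hab : IsCoprime a b) (hcd : IsCoprime c d)
    (H : ∀ q : ℕ, 0 < q → (C e * (C b * X - C a) * (C d * X - C c)).HasCoprimeRootMod q) :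
    IsCoprime (a * b) (c * d) := by
  have key : ∀ p : ℤ, Prime p → p ∣ a * b → ¬ p ∣ c * d := by
    intro p hp hpab hpcd
    obtain ⟨r, hr, hdvd⟩ := H (p * e).natAbs (Int.natAbs_pos.2 (mul_ne_zero hp.ne_zero he))
    have hpr : ¬ p ∣ r := fun hpr =>
      hp.not_isUnit (hr.isUnit_of_dvd' hpr (Int.dvd_natAbs.2 (dvd_mul_right p e)))
    simp only [Int.natAbs_dvd, eval_mul, eval_sub, eval_C, eval_X, mul_comm p, mul_assoc] at hdvd
    rcases hp.dvd_or_dvd ((mul_dvd_mul_iff_left he).1 hdvd) with h₁ | h₂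
    · exact hp.not_dvd_mul_sub hab hpab hpr h₁
    · exact hp.not_dvd_mul_sub hcd hpcd hpr h₂
  refine isCoprime_of_prime_dvd ?_ key
  rintro ⟨hab0, hcd0⟩
  exact key 2 Int.prime_two (by simp [hab0]) (by simp [hcd0])

lemma eq_quadratic_of_natDegree_eq_two {h : ℤ[X]} (hdeg : h.natDegree = 2) :
    h = C (h.coeff 2) * X ^ 2 + C (h.coeff 1) * X + C (h.coeff 0) := by
  conv_lhs => rw [as_sum_range_C_mul_X_pow h, hdeg]
  simp only [Finset.sum_range_succ, Finset.range_one, Finset.sum_singleton, pow_zero, mul_one,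
    pow_one]
  ring

end Polynomial

/-- **Characterization of `ℙ`-intersective quadratics**: a quadratic `h ∈ ℤ[x]` is
`ℙ`-intersective if and only if it factors as `e(bx - a)(dx - c)` with rational roots
`a/b`, `c/d` in lowest terms satisfying `gcd(ab, cd) = 1`. -/
theorem P_intersective_quadratic_iff (h : Polynomial ℤ) (hdeg : h.natDegree = 2) :
    (∀ q : ℕ, 0 < q → ∃ r : ℤ, Int.gcd r q = 1 ∧ (q : ℤ) ∣ h.eval r) ↔
    (∃ a b c d e : ℤ, 1 ≤ b ∧ 1 ≤ d ∧ e ≠ 0 ∧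
      Int.gcd a b = 1 ∧ Int.gcd c d = 1 ∧ Int.gcd (a * b) (c * d) = 1 ∧
      h = Polynomial.C e * (Polynomial.C b * Polynomial.X - Polynomial.C a) *
        (Polynomial.C d * Polynomial.X - Polynomial.C c)) := by
  simp only [← Int.isCoprime_iff_gcd_eq_one]
  change (∀ q : ℕ, 0 < q → h.HasCoprimeRootMod q) ↔ _
  constructor
  · intro H
    have hquad := eq_quadratic_of_natDegree_eq_two hdeg
    have hA : h.coeff 2 ≠ 0 := by
      rw [← hdeg, coeff_natDegree, Ne, leadingCoeff_eq_zero]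
      rintro rfl
      simp at hdeg
    rw [hquad] at H
    obtain ⟨s, hs⟩ :=
      isSquare_discrim_of_forall_dvd_eval fun q hq => (H q hq).imp fun _ => And.right
    obtain ⟨a, b, c, d, e, hb, hd, hab, hcd, hfac⟩ :=
      exists_primitive_factorization_of_discrim_eq hA hs
    rw [hfac] at H
    have he : e ≠ 0 := by
      rintro rfl
      simp [hquad.trans hfac] at hdeg
    exact ⟨a, b, c, d, e, hb, hd, he, hab, hcd,
      isCoprime_mul_of_forall_hasCoprimeRootMod he hab hcd H, hquad.trans hfac⟩
  · rintro ⟨a, b, c, d, e, -, -, -, -, -, habcd, rfl⟩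
    exact hasCoprimeRootMod_of_isCoprime e habcd
end

section
/- Let h ∈ ℤ[x] and suppose there exist integers a, b, c, d with b ≥ 1, d ≥ 1, gcd(a, b) = 1, gcd(c, d) = 1, and gcd(a·b, c·d) = 1 such that h(a/b) = 0 and h(c/d) = 0. Then h is P-intersective: for every q ∈ ℕ there exists r ∈ ℤ with gcd(r, q) = 1 and q ∣ h(r). -/
/-!
If `h(a/b) = 0` and `m` is coprime to `ab`, then `r ≡ a b⁻¹ (mod m)` is a unit modulo `m`, and
`b^(deg h) h(r) ≡ (scaleRoots h b)(a) = 0 (mod m)`, so `r` is a root of `h` modulo `m`.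
Since `gcd(ab, cd) = 1`, every prime power is coprime to `ab` or to `cd`, and roots at
coprime moduli glue by the Chinese remainder theorem.
-/

open Polynomial

def HasCoprimeRootMod {R : Type*} [CommRing R] (h : R[X]) (m : R) : Prop :=
  ∃ r : R, IsCoprime r m ∧ m ∣ h.eval r

section CommRing

variable {R : Type*} [CommRing R]

theorem IsCoprime.exists_dvd_sub_and_dvd_sub {m n : R} (hmn : IsCoprime m n) (r s : R) :
    ∃ t, m ∣ t - r ∧ n ∣ t - s := by
  obtain ⟨u, v, huv⟩ := hmn
  refine ⟨r * (v * n) + s * (u * m), ⟨(s - r) * u, ?_⟩, ⟨(r - s) * v, ?_⟩⟩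
  · linear_combination r * huv
  · linear_combination s * huv

theorem isCoprime_and_dvd_eval_of_dvd_sub {h : R[X]} {m r s : R}
    (hs : IsCoprime s m ∧ m ∣ h.eval s) (hrs : m ∣ r - s) :
    IsCoprime r m ∧ m ∣ h.eval r := by
  obtain ⟨k, hk⟩ := hrs
  refine ⟨?_, ?_⟩
  · rw [sub_eq_iff_eq_add'.mp hk, mul_comm]
    exact hs.1.add_mul_right_left k
  · have := dvd_add ((Dvd.intro k hk.symm).trans (sub_dvd_eval_sub r s h)) hs.2
    rwa [sub_add_cancel] at this

namespace HasCoprimeRootMod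

variable {h : R[X]} {m n : R}

theorem of_isUnit (hm : IsUnit m) : HasCoprimeRootMod h m :=
  ⟨1, isCoprime_one_left, hm.dvd⟩

theorem mul (hmn : IsCoprime m n) (hm : HasCoprimeRootMod h m) (hn : HasCoprimeRootMod h n) :
    HasCoprimeRootMod h (m * n) := by
  obtain ⟨r, hr⟩ := hm
  obtain ⟨s, hs⟩ := hn
  obtain ⟨t, htr, hts⟩ := hmn.exists_dvd_sub_and_dvd_sub r s
  obtain ⟨htm, hm⟩ := isCoprime_and_dvd_eval_of_dvd_sub hr htr
  obtain ⟨htn, hn⟩ := isCoprime_and_dvd_eval_of_dvd_sub hs hts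
  exact ⟨t, htm.mul_right htn, hmn.mul_dvd hm hn⟩

end HasCoprimeRootMod

theorem hasCoprimeRootMod_of_aeval_div_eq_zero {K : Type*} [Field K] [Algebra R K]
    (inj : Function.Injective (algebraMap R K)) {h : R[X]} {a b m : R}
    (hroot : aeval (algebraMap R K a / algebraMap R K b) h = 0) (hm : IsCoprime (a * b) m) :
    HasCoprimeRootMod h m := by
  -- For `b = 0` the root `a / 0 = 0` carries no information, but then `m` is a unit.
  rcases eq_or_ne b 0 with rfl | hb
  · exact .of_isUnit (isCoprime_zero_left.mp (by simpa using hm))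
  obtain ⟨u, v, huv⟩ := hm.of_mul_left_right
  have hscaled : (h.scaleRoots b).eval a = 0 := by
    have := scaleRoots_eval₂_eq_zero (algebraMap R K) (s := b) hroot
    rwa [mul_div_cancel₀ _ ((map_ne_zero_iff _ inj).mpr hb), eval₂_at_apply,
      ← map_zero (algebraMap R K), inj.eq_iff] at this
  refine ⟨a * u, hm.of_mul_left_left.mul_left ⟨b, v, by linear_combination huv⟩, ?_⟩
  have hdvd : m ∣ (h.scaleRoots b).eval (b * (a * u)) := by
    have := sub_dvd_eval_sub (b * (a * u)) a (h.scaleRoots b)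
    rw [hscaled, sub_zero] at this
    exact (Dvd.intro (-(a * v)) (by linear_combination (-a) * huv)).trans this
  rw [scaleRoots_eval_mul] at hdvd
  exact (hm.of_mul_left_right.symm.pow_right).dvd_of_dvd_mul_left hdvd

end CommRing

theorem IsCoprime.isCoprime_prime_pow_or {R : Type*} [CommRing R] [IsDomain R] [IsBezout R]
    {x y p : R} (hxy : IsCoprime x y) (hp : Prime p) (n : ℕ) :
    IsCoprime x (p ^ n) ∨ IsCoprime y (p ^ n) := by
  by_cases hpx : p ∣ x
  · have hpy : ¬p ∣ y := fun hpy ↦ hp.not_isUnit (hxy.isUnit_of_dvd' hpx hpy)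
    exact .inr (hp.coprime_iff_not_dvd.mpr hpy).pow_left.symm
  · exact .inl (hp.coprime_iff_not_dvd.mpr hpx).pow_left.symm

theorem two_coprime_rational_roots_P_intersective_general
    (h : Polynomial ℤ) (a b c d : ℤ)
    (hcop : Int.gcd (a * b) (c * d) = 1)
    (hra : Polynomial.aeval ((a : ℚ) / (b : ℚ)) h = 0)
    (hrc : Polynomial.aeval ((c : ℚ) / (d : ℚ)) h = 0) :
    ∀ q : ℕ, 0 < q → ∃ r : ℤ, Int.gcd r q = 1 ∧ (q : ℤ) ∣ h.eval r := by
  intro q hq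
  suffices HasCoprimeRootMod h (q : ℤ) by
    obtain ⟨r, hr, hdvd⟩ := this
    exact ⟨r, Int.isCoprime_iff_gcd_eq_one.mp hr, hdvd⟩
  induction q using Nat.recOnPosPrimePosCoprime with
  | zero => exact absurd hq (lt_irrefl 0)
  | one => exact .of_isUnit (by simp)
  | prime_pow p n hp _ =>
    push_cast
    exact ((Int.isCoprime_iff_gcd_eq_one.mpr hcop).isCoprime_prime_pow_or
      (Nat.prime_iff_prime_int.mp hp) n).elim
      (hasCoprimeRootMod_of_aeval_div_eq_zero Int.cast_injective hra)
      (hasCoprimeRootMod_of_aeval_div_eq_zero Int.cast_injective hrc)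
  | coprime m n hm hn hmn ihm ihn =>
    push_cast
    exact .mul (Nat.isCoprime_iff_coprime.mpr hmn) (ihm (by omega)) (ihn (by omega))

/-- **Sufficiency of two coprime rational roots**: if `h ∈ ℤ[x]` has rational roots
`a/b` and `c/d` in lowest terms with `gcd(ab, cd) = 1`, then `h` is `ℙ`-intersective:
for every `q ∈ ℕ` there is `r ∈ ℤ` with `gcd(r, q) = 1` and `q ∣ h(r)`. -/
theorem two_coprime_rational_roots_P_intersective
    (h : Polynomial ℤ) (a b c d : ℤ)
    (hb : 1 ≤ b) (hd : 1 ≤ d) (hab : Int.gcd a b = 1) (hcd : Int.gcd c d = 1)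
    (hcop : Int.gcd (a * b) (c * d) = 1)
    (hra : Polynomial.aeval ((a : ℚ) / (b : ℚ)) h = 0)
    (hrc : Polynomial.aeval ((c : ℚ) / (d : ℚ)) h = 0) :
    ∀ q : ℕ, 0 < q → ∃ r : ℤ, Int.gcd r q = 1 ∧ (q : ℤ) ∣ h.eval r :=
  two_coprime_rational_roots_P_intersective_general h a b c d hcop hra hrc
end
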